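/- arXiv:1509.04674 — 3 statements merged into one kernel-verified Lean document; each statement's English description precedes it below -/
import Mathlib

section
/- Let M, K, N be positive integers, H1 a complex M×K matrix, H2 a complex N×M matrix, and let f2, f4 ≥ 0, f3 > 0 be real numbers with f1 = (f2+f4)/f3. Let Φ = f2·H2·H1·H1^H·H2^H + f3·H2·H2^H + I_N. Then det(Φ + f4·H2·H1·H1^H·H2^H) = det(I_M + f3·H2^H·H2·(I_M + f1·H1·H1^H)). -/
open Matrix

/-- Eq. (16) of the paper: alternative form of the first capacity term,
`det(Φ + f4·H2H1H1ᴴH2ᴴ) = det(I_M + f3·H2ᴴH2(I_M + f1·H1H1ᴴ))`. -/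
theorem dh_af_capacity_term_C1
    (M K N : ℕ) (hM : 0 < M) (hK : 0 < K) (hN : 0 < N)
    (H1 : Matrix (Fin M) (Fin K) ℂ) (H2 : Matrix (Fin N) (Fin M) ℂ)
    (f1 f2 f3 f4 : ℝ) (hf2 : 0 ≤ f2) (hf4 : 0 ≤ f4) (hf3 : 0 < f3)
    (hf1 : f1 = (f2 + f4) / f3)
    (Φ : Matrix (Fin N) (Fin N) ℂ)
    (hΦ : Φ = (f2 : ℂ) • (H2 * H1 * H1ᴴ * H2ᴴ) + (f3 : ℂ) • (H2 * H2ᴴ) + 1) :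
    (Φ + (f4 : ℂ) • (H2 * H1 * H1ᴴ * H2ᴴ)).det =
      ((1 : Matrix (Fin M) (Fin M) ℂ) +
        (f3 : ℂ) • (H2ᴴ * H2 * (1 + (f1 : ℂ) • (H1 * H1ᴴ)))).det := by
  set C : Matrix (Fin M) (Fin M) ℂ :=
    (f3 : ℂ) • 1 + ((f2 : ℂ) + (f4 : ℂ)) • (H1 * H1ᴴ) with hC
  have h1 : Φ + (f4 : ℂ) • (H2 * H1 * H1ᴴ * H2ᴴ) = 1 + (H2 * C) * H2ᴴ := by
    subst hΦ
    simp only [hC, Matrix.mul_add, Matrix.add_mul, Matrix.mul_smul, Matrix.smul_mul,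
      Matrix.mul_one, add_smul, Matrix.mul_assoc]
    abel
  have hf31 : (f3 : ℂ) * (f1 : ℂ) = (f2 : ℂ) + (f4 : ℂ) := by
    subst hf1
    push_cast
    field_simp
    exact mul_div_cancel_left₀ _ (by exact_mod_cast hf3.ne')
  have h2 : (1 : Matrix (Fin M) (Fin M) ℂ) +
      (f3 : ℂ) • (H2ᴴ * H2 * (1 + (f1 : ℂ) • (H1 * H1ᴴ))) = 1 + H2ᴴ * (H2 * C) := by
    simp only [hC, Matrix.mul_add, Matrix.add_mul, Matrix.mul_smul, Matrix.smul_mul,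
      Matrix.mul_one, smul_smul, hf31, Matrix.mul_assoc, smul_add]
  rw [h1, h2, Matrix.det_one_add_mul_comm]
end

section
/- Let β ≥ 1 and ᾱ > 0 be real numbers, and let f̃_{ᾱ,β}(z) = √(max(z−1−ᾱ+2ᾱ√β−ᾱβ, 0)·max(ᾱ+2ᾱ√β+ᾱβ−z+1, 0))/(2ᾱπ(z−1)) for z > 1 and f̃_{ᾱ,β}(z) = 0 for z ≤ 1. For x ∈ (0,1), define g(x) = ( −xᾱ − βᾱ + ᾱ − 1 + √( x²ᾱ² + 2xᾱ²β − 2xᾱ² − 2xᾱ + β²ᾱ² − 2βᾱ² + 2βᾱ + ᾱ² + 2ᾱ + 1 ) ) / (2xᾱ). Then g(x) > 0 and ∫_ℝ f̃_{ᾱ,β}(z)/(1 + g(x)·z) dz = x. -/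
open MeasureTheory

open Real in

lemma eta_integrable {p : ℝ} (hp : 1 ≤ p) :
    IntervalIntegrable (fun t => Real.sqrt (1 - t^2) / (p + t)) volume (-1) 1 := by
  have h0 : IntervalIntegrable (fun t : ℝ => t ^ (-((1:ℝ)/2))) volume 0 2 :=
    intervalIntegral.intervalIntegrable_rpow' (by norm_num)
  have h1 := h0.comp_add_right 1
  norm_num at h1
  -- h1 : IntervalIntegrable (fun x => (x+1) ^ (-2⁻¹)) volume (-1) 1  (check)
  have hb := h1.const_mul (Real.sqrt 2)
  apply hb.mono_fun
  · apply Measurable.aestronglyMeasurable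
    fun_prop
  · have hIoc : Set.uIoc (-1:ℝ) 1 = Set.Ioc (-1:ℝ) 1 := Set.uIoc_of_le (by norm_num)
    rw [hIoc, Filter.EventuallyLE, ae_restrict_iff' measurableSet_Ioc]
    filter_upwards with t ht
    have ht1 : 0 < 1 + t := by linarith [ht.1]
    have ht2 : t ≤ 1 := ht.2
    have hpt : 0 < p + t := by linarith [ht.1]
    have hu : (0:ℝ) < Real.sqrt (1+t) := Real.sqrt_pos.2 ht1
    have hs : Real.sqrt (1 - t^2) = Real.sqrt (1+t) * Real.sqrt (1-t) := by
      rw [← Real.sqrt_mul (by linarith)]; ring_nf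
    have hrpow : (t + 1) ^ (-((1:ℝ)/2)) = (Real.sqrt (1+t))⁻¹ := by
      rw [Real.rpow_neg (by linarith), Real.sqrt_eq_rpow,
        add_comm]
    simp only [norm_div, Real.norm_eq_abs, norm_mul]
    rw [abs_of_nonneg (Real.sqrt_nonneg _), abs_of_pos hpt,
      abs_of_nonneg (Real.sqrt_nonneg _),
      abs_of_nonneg (Real.rpow_nonneg (by linarith) _)]
    rw [hs, hrpow]
    calc Real.sqrt (1+t) * Real.sqrt (1-t) / (p + t)
        ≤ Real.sqrt (1+t) * Real.sqrt (1-t) / (1 + t) := by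
          gcongr
      _ = Real.sqrt (1-t) / Real.sqrt (1+t) := by
          rw [div_eq_div_iff (by positivity) hu.ne']
          linear_combination (Real.mul_self_sqrt ht1.le) * Real.sqrt (1-t)
      _ ≤ Real.sqrt 2 / Real.sqrt (1+t) := by
          gcongr
          linarith
      _ = Real.sqrt 2 * (Real.sqrt (1+t))⁻¹ := by ring

open Real in
lemma eta_basic {p : ℝ} (hp : 1 ≤ p) :
    ∫ t in (-1:ℝ)..1, Real.sqrt (1 - t^2) / (p + t)
      = Real.pi * (p - Real.sqrt (p^2 - 1)) := by
  have hderiv_arc : ∀ t ∈ Set.Ioo (-1:ℝ) 1,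
      HasDerivAt Real.arcsin (1 / Real.sqrt (1 - t^2)) t := fun t ht =>
    Real.hasDerivAt_arcsin ht.1.ne' ht.2.ne
  have hderiv_sqrt : ∀ t ∈ Set.Ioo (-1:ℝ) 1,
      HasDerivAt (fun t => Real.sqrt (1 - t^2)) (1 / (2 * Real.sqrt (1 - t^2)) * (-(2*t))) t := by
    intro t ht
    have h1 : (0:ℝ) < 1 - t^2 := by nlinarith [ht.1, ht.2]
    have dinner : HasDerivAt (fun t : ℝ => 1 - t^2) (-(2*t)) t := by
      simpa using ((hasDerivAt_pow 2 t).const_sub 1)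
    exact (Real.hasDerivAt_sqrt h1.ne').comp t dinner
  rcases eq_or_lt_of_le hp with hp1 | hp1
  · subst hp1
    have hcont : Continuous (fun t : ℝ => Real.arcsin t + Real.sqrt (1 - t^2)) :=
      Real.continuous_arcsin.add (Real.continuous_sqrt.comp (by continuity))
    have key := intervalIntegral.integral_eq_sub_of_hasDerivAt_of_tendsto
      (f := fun t => Real.arcsin t + Real.sqrt (1 - t^2))
      (f' := fun t => Real.sqrt (1 - t^2) / (1 + t))
      (a := -1) (b := 1) (fa := -(Real.pi/2)) (fb := Real.pi/2)
      (by norm_num)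
      (fun t ht => by
        have h1 : (0:ℝ) < 1 - t^2 := by nlinarith [ht.1, ht.2]
        have hs : (0:ℝ) < Real.sqrt (1 - t^2) := Real.sqrt_pos.2 h1
        have hss : Real.sqrt (1-t^2) * Real.sqrt (1-t^2) = 1 - t^2 :=
          Real.mul_self_sqrt h1.le
        have := (hderiv_arc t ht).add (hderiv_sqrt t ht)
        convert this using 1
        · rfl
        have h1t : (0:ℝ) < 1 + t := by linarith [ht.1]
        have hr : 1 / Real.sqrt (1-t^2) + 1/(2*Real.sqrt (1-t^2)) * (-(2*t))
            = (1 - t^2) / (Real.sqrt (1-t^2) * (1+t)) := by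
          field_simp
          ring
        rw [hr, div_eq_div_iff h1t.ne' (by positivity)]
        linear_combination (1+t) * hss)
      (eta_integrable le_rfl)
      (by
        have h := (hcont.tendsto (-1)).mono_left (nhdsWithin_le_nhds (s := Set.Ioi (-1:ℝ)))
        simpa [Real.arcsin_neg_one, show (1:ℝ) - (-1:ℝ)^2 = 0 by norm_num] using h)
      (by
        have h := (hcont.tendsto 1).mono_left (nhdsWithin_le_nhds (s := Set.Iio (1:ℝ)))
        simpa [Real.arcsin_one, show (1:ℝ) - (1:ℝ)^2 = 0 by norm_num] using h)
    rw [key]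
    norm_num
  · -- 1 < p
    set q := Real.sqrt (p^2 - 1) with hq
    have hq2 : q^2 = p^2 - 1 := Real.sq_sqrt (by nlinarith)
    have hq0 : 0 < q := Real.sqrt_pos.2 (by nlinarith)
    set f : ℝ → ℝ := fun t => p * Real.arcsin t + Real.sqrt (1 - t^2)
      - q * Real.arcsin ((1 + p*t)/(p + t)) with hf
    have hfc : ∀ y : ℝ, p + y ≠ 0 → ContinuousAt f y := by
      intro y hy
      apply ContinuousAt.sub
      · exact (Real.continuous_arcsin.continuousAt.comp (by fun_prop)).const_smul p |>.add
          (by fun_prop)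
      · exact (Real.continuous_arcsin.continuousAt.comp
          (ContinuousAt.div (by fun_prop) (by fun_prop) hy)).const_smul q
    have key := intervalIntegral.integral_eq_sub_of_hasDerivAt_of_tendsto
      (f := f) (f' := fun t => Real.sqrt (1 - t^2) / (p + t))
      (a := -1) (b := 1)
      (fa := -(p * (Real.pi/2)) + q * (Real.pi/2))
      (fb := p * (Real.pi/2) - q * (Real.pi/2))
      (by norm_num)
      (fun t ht => by
        have h1 : (0:ℝ) < 1 - t^2 := by nlinarith [ht.1, ht.2]
        have hs : (0:ℝ) < Real.sqrt (1 - t^2) := Real.sqrt_pos.2 h1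
        have hss : Real.sqrt (1-t^2) * Real.sqrt (1-t^2) = 1 - t^2 :=
          Real.mul_self_sqrt h1.le
        have hw : (0:ℝ) < p + t := by linarith [ht.1]
        have hu : HasDerivAt (fun t : ℝ => (1 + p*t)/(p + t))
            ((p * (p + t) - (1 + p*t) * 1)/(p + t)^2) t := by
          have hnum : HasDerivAt (fun t : ℝ => 1 + p*t) p t := by
            simpa using ((hasDerivAt_id t).const_mul p).const_add 1
          have hden : HasDerivAt (fun t : ℝ => p + t) 1 t := by
            simpa using (hasDerivAt_id t).const_add p
          simpa [Pi.div_def] using hnum.div hden hw.ne'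
        have h1u : (1:ℝ) - ((1 + p*t)/(p + t))^2 = (p^2 - 1)*(1 - t^2)/(p + t)^2 := by
          field_simp
          ring
        have h1upos : (0:ℝ) < 1 - ((1 + p*t)/(p + t))^2 := by
          rw [h1u]
          have hp2 : (0:ℝ) < p^2 - 1 := by nlinarith
          positivity
        have hne1 : (1 + p*t)/(p + t) ≠ 1 := by
          intro h; rw [h] at h1upos; norm_num at h1upos
        have hnem1 : (1 + p*t)/(p + t) ≠ -1 := by
          intro h; rw [h] at h1upos; norm_num at h1upos
        have hsu : Real.sqrt (1 - ((1 + p*t)/(p + t))^2)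
            = q * Real.sqrt (1 - t^2) / (p + t) := by
          rw [h1u, show (p^2 - 1)*(1 - t^2)/(p + t)^2
              = (q * Real.sqrt (1 - t^2) / (p + t))^2 by
            rw [div_pow, mul_pow, hq2, Real.sq_sqrt h1.le]]
          exact Real.sqrt_sq (by positivity)
        have darc : HasDerivAt (fun t : ℝ => Real.arcsin ((1 + p*t)/(p + t)))
            (1 / Real.sqrt (1 - ((1 + p*t)/(p + t))^2)
              * ((p * (p + t) - (1 + p*t) * 1)/(p + t)^2)) t :=
          by have hc := (Real.hasDerivAt_arcsin hnem1 hne1).comp t hu; exact hc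
        have total := (((hderiv_arc t ht).const_mul p).add (hderiv_sqrt t ht)).sub
          (darc.const_mul q)
        convert total using 1
        · rfl
        rw [hsu]
        have hr : p * (1 / Real.sqrt (1-t^2)) + 1/(2*Real.sqrt (1-t^2)) * (-(2*t))
            - q * (1 / (q * Real.sqrt (1-t^2) / (p+t))
                * ((p * (p + t) - (1 + p*t) * 1)/(p + t)^2))
            = (1 - t^2) / (Real.sqrt (1-t^2) * (p+t)) := by
          field_simp
          ring
        rw [hr, div_eq_div_iff hw.ne' (by positivity)]
        linear_combination (p+t) * hss)
      (eta_integrable hp)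
      (by
        have hne : p + (-1) ≠ 0 := by intro h; nlinarith
        have hca := hfc (-1) hne
        have h2 := hca.tendsto.mono_left (nhdsWithin_le_nhds (s := Set.Ioi (-1:ℝ)))
        have hv : f (-1) = -(p * (Real.pi/2)) + q * (Real.pi/2) := by
          show p * Real.arcsin (-1) + Real.sqrt (1 - (-1:ℝ)^2)
              - q * Real.arcsin ((1 + p*(-1))/(p + (-1))) = _
          rw [show (1 + p*(-1))/(p + (-1)) = -1 from by rw [div_eq_iff hne]; ring,
            Real.arcsin_neg_one, show (1:ℝ) - (-1:ℝ)^2 = 0 by norm_num, Real.sqrt_zero]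
          ring
        rwa [hv] at h2)
      (by
        have hne : p + (1:ℝ) ≠ 0 := by intro h; nlinarith
        have hca := hfc 1 hne
        have h2 := hca.tendsto.mono_left (nhdsWithin_le_nhds (s := Set.Iio (1:ℝ)))
        have hv : f 1 = p * (Real.pi/2) - q * (Real.pi/2) := by
          show p * Real.arcsin 1 + Real.sqrt (1 - (1:ℝ)^2)
              - q * Real.arcsin ((1 + p*1)/(p + 1)) = _
          rw [show (1 + p*1)/(p + 1) = 1 from by rw [div_eq_iff hne]; ring,
            Real.arcsin_one, show (1:ℝ) - (1:ℝ)^2 = 0 by norm_num, Real.sqrt_zero]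
          ring
        rwa [hv] at h2)
    rw [key]
    ring

open Real in
lemma eta_pair {p₁ p₂ : ℝ} (h1 : 1 ≤ p₁) (h12 : p₁ < p₂) :
    ∫ t in (-1:ℝ)..1, Real.sqrt (1 - t^2) / ((t + p₁) * (t + p₂))
      = Real.pi * ((Real.sqrt (p₂^2 - 1) - Real.sqrt (p₁^2 - 1))/(p₂ - p₁) - 1) := by
  have hkey : Set.EqOn
      (fun t => Real.sqrt (1 - t^2) / ((t + p₁) * (t + p₂)))
      (fun t => (p₂ - p₁)⁻¹ * (Real.sqrt (1 - t^2) / (p₁ + t)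
        - Real.sqrt (1 - t^2) / (p₂ + t)))
      (Set.uIcc (-1:ℝ) 1) := by
    intro t ht
    rw [Set.uIcc_of_le (by norm_num : (-1:ℝ) ≤ 1)] at ht
    rcases eq_or_lt_of_le ht.1 with h | h
    · simp only [← h]
      norm_num
    · have h1t : 0 < t + p₁ := by linarith
      have h2t : 0 < t + p₂ := by linarith
      have hd : p₂ - p₁ ≠ 0 := by linarith
      have e1 : Real.sqrt (1-t^2)/(p₁+t) - Real.sqrt (1-t^2)/(p₂+t)
          = Real.sqrt (1-t^2) * (p₂ - p₁) / ((t+p₁)*(t+p₂)) := by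
        rw [div_sub_div _ _ (by linarith : p₁+t ≠ 0) (by linarith : p₂+t ≠ 0)]
        rw [show (p₁+t)*(p₂+t) = (t+p₁)*(t+p₂) by ring]
        congr 1
        ring
      simp only [e1, ← mul_div_assoc,
        show (p₂-p₁)⁻¹ * (Real.sqrt (1-t^2)*(p₂-p₁)) = Real.sqrt (1-t^2) from by
          field_simp]
  rw [intervalIntegral.integral_congr hkey, intervalIntegral.integral_const_mul,
    intervalIntegral.integral_sub (by simpa [add_comm] using eta_integrable h1)
      (by simpa [add_comm] using eta_integrable (le_of_lt (lt_of_le_of_lt h1 h12))),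
    eta_basic h1, eta_basic (le_of_lt (lt_of_le_of_lt h1 h12))]
  have hd : p₂ - p₁ ≠ 0 := by linarith
  field_simp
  ring

open Real in
set_option maxHeartbeats 1000000 in
/-- Proposition 3 / eq. (29) of the paper: `g(x)` is the inverse η-transform of
`M̃_α/M`, i.e. `g(x) > 0` and `η(g(x)) = x` for every `x ∈ (0,1)`. -/
theorem inverse_eta_transform_M_tilde (β ab : ℝ) (hβ : 1 ≤ β) (hab : 0 < ab)
    (x : ℝ) (hx : x ∈ Set.Ioo (0 : ℝ) 1) :
    let g : ℝ :=
      (-x * ab - β * ab + ab - 1 +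
          Real.sqrt
            (x ^ 2 * ab ^ 2 + 2 * x * ab ^ 2 * β - 2 * x * ab ^ 2 - 2 * x * ab +
              β ^ 2 * ab ^ 2 - 2 * β * ab ^ 2 + 2 * β * ab + ab ^ 2 + 2 * ab + 1)) /
        (2 * x * ab)
    0 < g ∧
      (∫ z : ℝ,
          (if 1 < z then
            Real.sqrt
                (max (z - 1 - ab + 2 * ab * Real.sqrt β - ab * β) 0 *
                  max (ab + 2 * ab * Real.sqrt β + ab * β - z + 1) 0) /
              (2 * ab * Real.pi * (z - 1))
          else 0) / (1 + g * z)) = x := by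
  obtain ⟨hx0, hx1⟩ := hx
  intro g
  have hgdef : g =
      (-x * ab - β * ab + ab - 1 +
          Real.sqrt
            (x ^ 2 * ab ^ 2 + 2 * x * ab ^ 2 * β - 2 * x * ab ^ 2 - 2 * x * ab +
              β ^ 2 * ab ^ 2 - 2 * β * ab ^ 2 + 2 * β * ab + ab ^ 2 + 2 * ab + 1)) /
        (2 * x * ab) := rfl
  clear_value g
  set D : ℝ := x ^ 2 * ab ^ 2 + 2 * x * ab ^ 2 * β - 2 * x * ab ^ 2 - 2 * x * ab +
      β ^ 2 * ab ^ 2 - 2 * β * ab ^ 2 + 2 * β * ab + ab ^ 2 + 2 * ab + 1 with hD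
  set b : ℝ := x * ab + β * ab - ab + 1 with hb
  have hb0 : 0 < b := by nlinarith
  have hDb : D = b^2 + 4*ab*(1-x) := by rw [hD, hb]; ring
  have hD0 : 0 ≤ D := by nlinarith [sq_nonneg b]
  have hxab : 2 * x * ab ≠ 0 := by positivity
  have hsqD : Real.sqrt D = 2*x*ab*g + b := by
    rw [hgdef, hb]
    field_simp
    ring
  have hg0 : 0 < g := by
    have hlt : b < Real.sqrt D := by
      rw [show b = Real.sqrt (b^2) from (Real.sqrt_sq hb0.le).symm]
      exact Real.sqrt_lt_sqrt (sq_nonneg b) (by nlinarith)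
    rw [hgdef]
    apply div_pos _ (by positivity)
    have : -x * ab - β * ab + ab - 1 = -b := by rw [hb]; ring
    rw [this]
    linarith
  have hrel : x^2*ab*g^2 + x*b*g - (1-x) = 0 := by
    have h2 : (2*x*ab*g + b)^2 = b^2 + 4*ab*(1-x) := by
      rw [← hsqD, Real.sq_sqrt hD0, hDb]
    have h3 : 4*ab*(x^2*ab*g^2 + x*b*g - (1-x)) = 0 := by linear_combination h2
    exact (mul_eq_zero.mp h3).resolve_left (by positivity)
  refine ⟨hg0, ?_⟩
  set sβ : ℝ := Real.sqrt β with hsβ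
  have hs2 : sβ^2 = β := Real.sq_sqrt (by linarith)
  have hsβ1 : 1 ≤ sβ := by
    nlinarith [Real.sqrt_nonneg β, hs2]
  set r : ℝ := 2*ab*sβ with hr
  have hr0 : 0 < r := by rw [hr]; nlinarith
  set m : ℝ := 1 + ab + ab*β with hm
  have hm1 : 1 ≤ m - r := by rw [hm, hr]; nlinarith [sq_nonneg (sβ-1), hs2]
  set h : ℝ → ℝ := fun z =>
    Real.sqrt ((z - (m-r)) * ((m+r) - z)) / (2*ab*Real.pi*(z-1)*(1+g*z)) with hh
  have hind : (fun z : ℝ =>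
      (if 1 < z then
        Real.sqrt (max (z - 1 - ab + 2*ab*sβ - ab*β) 0 *
          max (ab + 2*ab*sβ + ab*β - z + 1) 0) / (2*ab*Real.pi*(z-1))
      else 0) / (1 + g*z)) = (Set.Ioo (m-r) (m+r)).indicator h := by
    funext z
    by_cases hz : z ∈ Set.Ioo (m-r) (m+r)
    · rw [Set.indicator_of_mem hz, hh]
      obtain ⟨hz1, hz2⟩ := hz
      rw [if_pos (by linarith)]
      rw [show z - 1 - ab + 2*ab*sβ - ab*β = z - (m-r) from by rw [hm, hr]; ring,
          show ab + 2*ab*sβ + ab*β - z + 1 = (m+r) - z from by rw [hm, hr]; ring,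
          max_eq_left (by linarith), max_eq_left (by linarith), div_div]
    · rw [Set.indicator_of_notMem hz]
      rw [Set.mem_Ioo, not_and_or] at hz
      push_neg at hz
      rcases hz with hz | hz
      · by_cases h1z : 1 < z
        · rw [if_pos h1z,
            show z - 1 - ab + 2*ab*sβ - ab*β = z - (m-r) from by rw [hm, hr]; ring,
            max_eq_right (show z - (m-r) ≤ 0 from by linarith), zero_mul, Real.sqrt_zero,
            zero_div, zero_div]
        · rw [if_neg h1z, zero_div]
      · rw [if_pos (show 1 < z from by linarith),
          show ab + 2*ab*sβ + ab*β - z + 1 = (m+r) - z from by rw [hm, hr]; ring,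
          max_eq_right (show (m+r) - z ≤ 0 from by linarith), mul_zero, Real.sqrt_zero,
          zero_div, zero_div]
  rw [hind]
  rw [MeasureTheory.integral_indicator measurableSet_Ioo]
  rw [← MeasureTheory.integral_Ioc_eq_integral_Ioo]
  rw [← intervalIntegral.integral_of_le (show m - r ≤ m + r from by linarith)]
  set p₁ : ℝ := (1+β)/(2*sβ) with hp₁def
  set p₂ : ℝ := (1+g*m)/(g*r) with hp₂def
  have hsβ0 : (0:ℝ) < sβ := by linarith
  have hp₁1 : 1 ≤ p₁ := by
    rw [hp₁def, le_div_iff₀ (by linarith)]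
    nlinarith [sq_nonneg (sβ-1), hs2]
  have hd21 : p₂ - p₁ = (1+g)/(g*r) := by
    rw [hp₁def, hp₂def, hm, hr]
    field_simp
    ring
  have hp₂1 : p₁ < p₂ := by
    have hpos : 0 < (1+g)/(g*r) := by positivity
    linarith [hd21 ▸ hpos]
  have hsub : ∫ z in (m-r)..(m+r), h z = r * ∫ t in (-1:ℝ)..1, h (r*t + m) := by
    rw [intervalIntegral.integral_comp_mul_add h hr0.ne' m,
      show r*(-1) + m = m - r from by ring, show r*1 + m = m + r from by ring,
      smul_eq_mul, ← mul_assoc, mul_inv_cancel₀ hr0.ne', one_mul]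
  have hcong : ∫ t in (-1:ℝ)..1, h (r*t+m)
      = ∫ t in (-1:ℝ)..1, Real.sqrt (1-t^2) / ((2*ab*Real.pi*(g*r)) * ((t+p₁)*(t+p₂))) := by
    apply intervalIntegral.integral_congr
    intro t ht
    rw [Set.uIcc_of_le (by norm_num : (-1:ℝ) ≤ 1)] at ht
    simp only [hh]
    have hnum : Real.sqrt ((r*t+m - (m-r)) * ((m+r) - (r*t+m))) = r * Real.sqrt (1-t^2) := by
      rw [show (r*t+m - (m-r)) * ((m+r) - (r*t+m)) = r^2 * (1-t^2) from by ring,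
        Real.sqrt_mul (sq_nonneg r), Real.sqrt_sq hr0.le]
    have hden : 2*ab*Real.pi*((r*t+m)-1)*(1+g*(r*t+m))
        = r * ((2*ab*Real.pi*(g*r)) * ((t+p₁)*(t+p₂))) := by
      rw [hp₁def, hp₂def, hm, hr]
      field_simp
      ring
    rw [hnum, hden, mul_div_mul_left _ _ hr0.ne']
  have hpull : ∫ t in (-1:ℝ)..1, Real.sqrt (1-t^2) / ((2*ab*Real.pi*(g*r)) * ((t+p₁)*(t+p₂)))
      = (2*ab*Real.pi*(g*r))⁻¹ * ∫ t in (-1:ℝ)..1, Real.sqrt (1-t^2)/((t+p₁)*(t+p₂)) := by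
    rw [← intervalIntegral.integral_const_mul]
    apply intervalIntegral.integral_congr
    intro t _
    simp only [div_eq_mul_inv, mul_inv]
    ring
  rw [hsub, hcong, hpull, eta_pair hp₁1 hp₂1]
  have e1 : Real.sqrt (p₁^2 - 1) = (β-1)/(2*sβ) := by
    rw [show p₁^2 - 1 = ((β-1)/(2*sβ))^2 from by
        rw [hp₁def]; field_simp; linear_combination (-4:ℝ) * hs2,
      Real.sqrt_sq (div_nonneg (by linarith) (by linarith))]
  set ρ : ℝ := (1+2*ab*x*g)*(1+g) + g*ab*(β-1) with hρ
  have hρ0 : 0 ≤ ρ := by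
    have h4 : 0 < ab*x*g := mul_pos (mul_pos hab hx0) hg0
    have h5 : 0 ≤ g*ab*(β-1) := mul_nonneg (mul_nonneg hg0.le hab.le) (by linarith)
    nlinarith [mul_pos h4 hg0]
  have e2 : Real.sqrt (p₂^2 - 1) = ρ/(g*r) := by
    have hgr : (0:ℝ) < g*r := mul_pos hg0 hr0
    have key : (1+g*m)^2 - (g*r)^2 = ρ^2 := by
      linear_combination (-(4*ab*g*(1+g)))*hrel + (-(4*ab^2*g^2))*hs2
    have hsplit : p₂^2 - 1 = ((1+g*m)^2 - (g*r)^2)/(g*r)^2 := by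
      rw [hp₂def]
      field_simp
    rw [hsplit, key, ← div_pow, Real.sqrt_sq (div_nonneg hρ0 hgr.le)]
  rw [e1, e2, hd21, hρ, hr]
  have hπ : Real.pi ≠ 0 := Real.pi_ne_zero
  field_simp
  ring
end

section
/- Let ᾱ > 0, β ≥ 1, γ > 0 be real numbers, and let x, s, r be complex numbers with x ≠ 0, s ≠ 0, and γ − xs − 1 ≠ 0. Set y = −x·s and suppose r² = y²ᾱ² + 2yᾱ²β − 2yᾱ² − 2yᾱ + β²ᾱ² − 2βᾱ² + 2βᾱ + ᾱ² + 2ᾱ + 1, and that h = (−yᾱ − βᾱ + ᾱ − 1 + r)/(2yᾱ) satisfies x·h/(γ + y − 1) + 1 = 0. Then s is a root of the quartic polynomial ᾱ²x²·s⁴ + (2ᾱ²(1−γ)x + ᾱ²x²)·s³ + (ᾱ²(2−β−γ)x + ᾱ²(γ−1)² − ᾱx)·s² + (ᾱ²(β(γ−1)−γ) + ᾱ(γ+ᾱ−x−1))·s − ᾱ = 0. -/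
/-- Eq. (32) of the paper: eliminating the square root from the relation
`x·η⁻¹_{K_α/M}(−xS) + 1 = 0`, with
`η⁻¹_{K_α/M}(u) = η⁻¹_{M̃_α/M}(u)/(γ + u − 1)`, shows that the Stieltjes
transform `s` satisfies the displayed quartic polynomial equation. -/
theorem stieltjes_quartic (ab β γ : ℝ) (hab : 0 < ab) (hβ : 1 ≤ β) (hγ : 0 < γ)
    (x s r y h : ℂ) (hx : x ≠ 0) (hs : s ≠ 0)
    (hden : (γ : ℂ) - x * s - 1 ≠ 0)
    (hy : y = -x * s)
    (hr : r ^ 2 =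
      y ^ 2 * (ab : ℂ) ^ 2 + 2 * y * (ab : ℂ) ^ 2 * (β : ℂ) - 2 * y * (ab : ℂ) ^ 2 -
        2 * y * (ab : ℂ) + (β : ℂ) ^ 2 * (ab : ℂ) ^ 2 - 2 * (β : ℂ) * (ab : ℂ) ^ 2 +
        2 * (β : ℂ) * (ab : ℂ) + (ab : ℂ) ^ 2 + 2 * (ab : ℂ) + 1)
    (hh : h = (-y * (ab : ℂ) - (β : ℂ) * (ab : ℂ) + (ab : ℂ) - 1 + r) / (2 * y * (ab : ℂ)))
    (heq : x * h / ((γ : ℂ) + y - 1) + 1 = 0) :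
    (ab : ℂ) ^ 2 * x ^ 2 * s ^ 4 +
        (2 * (ab : ℂ) ^ 2 * (1 - (γ : ℂ)) * x + (ab : ℂ) ^ 2 * x ^ 2) * s ^ 3 +
        ((ab : ℂ) ^ 2 * (2 - (β : ℂ) - (γ : ℂ)) * x + (ab : ℂ) ^ 2 * ((γ : ℂ) - 1) ^ 2 -
            (ab : ℂ) * x) * s ^ 2 +
        ((ab : ℂ) ^ 2 * ((β : ℂ) * ((γ : ℂ) - 1) - (γ : ℂ)) +
            (ab : ℂ) * ((γ : ℂ) + (ab : ℂ) - x - 1)) * s -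
        (ab : ℂ) = 0 := by
  have hab' : (ab : ℂ) ≠ 0 := by
    exact_mod_cast hab.ne'
  have hy0 : y ≠ 0 := by
    rw [hy]; simp [hx, hs]
  have hden' : (γ : ℂ) + y - 1 ≠ 0 := by
    rw [hy]; ring_nf; ring_nf at hden
    intro hcon; apply hden; linear_combination hcon
  -- from heq: x * h = -(γ + y - 1)
  have hxh : x * h = -((γ : ℂ) + y - 1) := by
    field_simp at heq
    linear_combination heq
  -- from hh: r = expression
  have hH : h * (2 * y * (ab : ℂ)) = -y * (ab : ℂ) - (β : ℂ) * (ab : ℂ) + (ab : ℂ) - 1 + r := by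
    rw [hh]; field_simp
  have rEq : r = 2 * s * (ab : ℂ) * ((γ : ℂ) + y - 1) + y * (ab : ℂ) + (β : ℂ) * (ab : ℂ)
      - (ab : ℂ) + 1 := by
    have h2 : h * (2 * y * (ab : ℂ)) = (x * h) * (-2 * s * (ab : ℂ)) := by
      rw [hy]; ring
    rw [h2, hxh] at hH
    linear_combination -hH
  subst rEq
  subst hy
  linear_combination (1/4 : ℂ) * hr
end
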